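/- arXiv:2312.15467 — 3 statements merged into one kernel-verified Lean document; each statement's English description precedes it below -/
import Mathlib

section
/- Let {C_1, ..., C_s} be a pairwise disjoint set of 2-cycle matrices and P a permutation matrix. Then for any binary vector α ∈ {0,1}^s, the product (∏_{i=1}^s C_i^{α_i})·P equals P + Σ_{i=1}^s α_i·(C_i − I_n)·P. -/
def permMat {n : ℕ} (π : Equiv.Perm (Fin n)) : Matrix (Fin n) (Fin n) ℝ :=
  fun i j => if π i = j then 1 else 0

def IsPermMatrix {n : ℕ} (P : Matrix (Fin n) (Fin n) ℝ) : Prop :=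
  ∃ π : Equiv.Perm (Fin n), P = permMat π

def IsTwoCycleMatrix {n : ℕ} (C : Matrix (Fin n) (Fin n) ℝ) : Prop :=
  ∃ i j : Fin n, i ≠ j ∧ C = permMat (Equiv.swap i j)

def DisjointTwoCycles {n : ℕ} (C C' : Matrix (Fin n) (Fin n) ℝ) : Prop :=
  ∀ i : Fin n, (C i i = 0 → C' i i = 1) ∧ (C' i i = 0 → C i i = 1)

/-! Write each factor as `1 + α i • (C i - 1)`. For disjoint permutations `σ, τ` the product
`(permMat σ - 1) * (permMat τ - 1)` vanishes entrywise, so all cross terms of the expanded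
product are zero and only the linear terms survive. -/

theorem prod_ofFn_one_add_eq_one_add_sum {R : Type*} [Semiring R] {s : ℕ} (e : Fin s → R)
    (he : ∀ i j, i < j → e i * e j = 0) :
    (List.ofFn fun i => 1 + e i).prod = 1 + ∑ i, e i := by
  induction s with
  | zero => simp
  | succ m ih =>
    have htail : e 0 * ∑ i : Fin m, e i.succ = 0 := by
      rw [Finset.mul_sum]
      exact Finset.sum_eq_zero fun i _ => he 0 i.succ i.succ_pos
    rw [List.ofFn_succ, List.prod_cons, ih _ fun i j hij => he _ _ (Fin.succ_lt_succ_iff.2 hij),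
      Fin.sum_univ_succ, add_mul, one_mul, mul_add, mul_one, htail, add_zero, add_right_comm,
      add_assoc]

theorem permMat_mul_apply {n : ℕ} (σ : Equiv.Perm (Fin n)) (M : Matrix (Fin n) (Fin n) ℝ)
    (i j : Fin n) : (permMat σ * M) i j = M (σ i) j := by
  simp [permMat, Matrix.mul_apply]

theorem permMat_sub_one_mul_permMat_sub_one {n : ℕ} {σ τ : Equiv.Perm (Fin n)}
    (h : σ.Disjoint τ) : (permMat σ - 1) * (permMat τ - 1) = 0 := by
  ext i j
  rw [Matrix.sub_mul, one_mul, Matrix.sub_apply, permMat_mul_apply, Matrix.zero_apply]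
  by_cases hσ : σ i = i
  · rw [hσ, sub_self]
  · have hτ : τ i = i := (h i).resolve_left hσ
    have hτσ : τ (σ i) = σ i := (h (σ i)).resolve_left fun h' => hσ (σ.injective h')
    simp [permMat, Matrix.one_apply, hτ, hτσ]

theorem disjoint_of_disjointTwoCycles {n : ℕ} {σ τ : Equiv.Perm (Fin n)}
    (h : DisjointTwoCycles (permMat σ) (permMat τ)) : σ.Disjoint τ := by
  intro i
  by_contra! hne
  simpa [permMat, hne.1, hne.2] using (h i).1

theorem cyclic_expansion_update_general {n s : ℕ} (C : Fin s → Matrix (Fin n) (Fin n) ℝ)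
    (hC : ∀ i, IsTwoCycleMatrix (C i))
    (hdisj : ∀ i j, i ≠ j → DisjointTwoCycles (C i) (C j))
    (P : Matrix (Fin n) (Fin n) ℝ)
    (α : Fin s → ℝ) (hα : ∀ i, α i = 0 ∨ α i = 1) :
    (List.ofFn fun i => if α i = 1 then C i else 1).prod * P
      = P + ∑ i, α i • ((C i - 1) * P) := by
  choose a b _ hab using hC
  have hfactor : ∀ i, (if α i = 1 then C i else 1) = 1 + α i • (C i - 1) := fun i => by
    rcases hα i with h | h <;> simp [h]
  have horth : ∀ i j, i < j → α i • (C i - 1) * α j • (C j - 1) = 0 := fun i j hij => by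
    have hsw := hdisj i j hij.ne
    rw [hab i, hab j] at hsw ⊢
    rw [smul_mul_smul_comm, permMat_sub_one_mul_permMat_sub_one
      (disjoint_of_disjointTwoCycles hsw), smul_zero]
  simp_rw [hfactor, prod_ofFn_one_add_eq_one_add_sum _ horth, add_mul, one_mul,
    Finset.sum_mul, Matrix.smul_mul]

/-- For pairwise disjoint 2-cycle matrices `C 1, …, C s`, a permutation matrix `P`
and a binary vector `α`, `(∏ i, (C i)^(α i)) * P = P + ∑ i, α i • ((C i - I) * P)`. -/
theorem cyclic_expansion_update {n s : ℕ} (C : Fin s → Matrix (Fin n) (Fin n) ℝ)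
    (hC : ∀ i, IsTwoCycleMatrix (C i))
    (hdisj : ∀ i j, i ≠ j → DisjointTwoCycles (C i) (C j))
    (P : Matrix (Fin n) (Fin n) ℝ) (hP : IsPermMatrix P)
    (α : Fin s → ℝ) (hα : ∀ i, α i = 0 ∨ α i = 1) :
    (List.ofFn fun i => if α i = 1 then C i else 1).prod * P
      = P + ∑ i, α i • ((C i - 1) * P) :=
  cyclic_expansion_update_general C hC hdisj P α hα
end

section
/- Every permutation on n elements can be written as a product of two permutations, each of which is a product of pairwise disjoint transpositions (i.e., each is an involution). -/
/-!
An involution `σ` with `σ * g * σ = g⁻¹` writes `g = σ * (σ * g)` as a product of two involutions.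
For a cycle `c` through `a`, such a `σ` is the reflection `c ^ i a ↦ c ^ (-i) a` of its orbit.
Reflections of disjoint cycles are disjoint from each other and from the other cycles, so their
product reverses the product of the cycles, and induction on the cycle decomposition finishes.
-/

open Function

section Group

variable {G : Type*} [Group G]

theorem exists_mul_self_eq_one_and_eq_mul_of_conj_eq_inv {s g : G} (hs : s * s = 1)
    (hg : s * g * s = g⁻¹) : ∃ σ τ : G, σ * σ = 1 ∧ τ * τ = 1 ∧ g = σ * τ :=
  ⟨s, s * g, hs, by rw [← mul_assoc, hg, inv_mul_cancel], by rw [← mul_assoc, hs, one_mul]⟩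

theorem Commute.conj_mul_eq_inv {a b s t : G} (hab : Commute a b) (hsb : Commute s b)
    (hta : Commute t a) (hst : Commute s t) (ha : s * a * s = a⁻¹) (hb : t * b * t = b⁻¹) :
    s * t * (a * b) * (s * t) = (a * b)⁻¹ :=
  calc s * t * (a * b) * (s * t) = s * (t * a) * (b * s) * t := by simp only [mul_assoc]
    _ = s * a * (t * s) * b * t := by rw [hta.eq, ← hsb.eq]; simp only [mul_assoc]
    _ = s * a * s * (t * b * t) := by rw [← hst.eq]; simp only [mul_assoc]
    _ = (a * b)⁻¹ := by rw [ha, hb, ← mul_inv_rev, hab.eq]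

end Group

namespace Equiv.Perm

variable {α : Type*}

theorem zpow_neg_apply_eq_of_zpow_apply_eq (c : Perm α) {a : α} {i j : ℤ}
    (h : (c ^ i) a = (c ^ j) a) : (c ^ (-i)) a = (c ^ (-j)) a := by
  apply (c ^ (i + j)).injective
  simp only [← mul_apply, ← zpow_add]
  rw [show i + j + -i = j by ring, show i + j + -j = i by ring, h]

open Classical in
/-- Well defined by `zpow_neg_apply_eq_of_zpow_apply_eq`; the identity off the orbit of `a`. -/
noncomputable def orbitReflection (c : Perm α) (a x : α) : α :=
  if h : c.SameCycle a x then (c ^ (-h.choose)) a else x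

variable {c : Perm α} {a x : α}

theorem orbitReflection_zpow_apply (i : ℤ) : orbitReflection c a ((c ^ i) a) = (c ^ (-i)) a := by
  have h : c.SameCycle a ((c ^ i) a) := ⟨i, rfl⟩
  rw [orbitReflection, dif_pos h]
  exact zpow_neg_apply_eq_of_zpow_apply_eq c h.choose_spec

theorem orbitReflection_of_not_sameCycle (h : ¬c.SameCycle a x) : orbitReflection c a x = x :=
  dif_neg h

theorem orbitReflection_involutive (c : Perm α) (a : α) : Involutive (orbitReflection c a) := by
  intro x
  by_cases hx : c.SameCycle a x
  · obtain ⟨i, rfl⟩ := hx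
    rw [orbitReflection_zpow_apply, orbitReflection_zpow_apply, neg_neg]
  · rw [orbitReflection_of_not_sameCycle hx, orbitReflection_of_not_sameCycle hx]

theorem orbitReflection_apply_orbitReflection (hx : c.SameCycle a x) :
    orbitReflection c a (c (orbitReflection c a x)) = c⁻¹ x := by
  obtain ⟨i, rfl⟩ := hx
  rw [orbitReflection_zpow_apply, ← mul_apply, ← zpow_one_add, orbitReflection_zpow_apply,
    ← mul_apply, ← zpow_neg_one, ← zpow_add]
  congr 2
  ring

theorem IsCycle.exists_involution_conj_eq_inv (hc : c.IsCycle) :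
    ∃ σ : Perm α, σ * σ = 1 ∧ σ * c * σ = c⁻¹ ∧ fixedPoints c ⊆ fixedPoints σ := by
  obtain ⟨a, ha, horbit⟩ := hc
  refine ⟨(orbitReflection_involutive c a).toPerm, ?_, ?_, ?_⟩
  · ext x
    exact orbitReflection_involutive c a x
  · ext x
    by_cases hx : c.SameCycle a x
    · exact orbitReflection_apply_orbitReflection hx
    · have hcx : c x = x := not_not.mp (mt (@horbit x) hx)
      simp [orbitReflection_of_not_sameCycle hx, hcx, inv_eq_iff_eq.mpr hcx.symm]
  · intro x hx
    refine orbitReflection_of_not_sameCycle fun h => ha ?_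
    exact h.apply_eq_self_iff.mpr hx

theorem exists_involution_conj_eq_inv [Finite α] (π : Perm α) :
    ∃ σ : Perm α, σ * σ = 1 ∧ σ * π * σ = π⁻¹ ∧ fixedPoints π ⊆ fixedPoints σ := by
  induction π using cycle_induction_on with
  | base_one => exact ⟨1, one_mul 1, by simp, fun _ _ => rfl⟩
  | base_cycles c hc => exact hc.exists_involution_conj_eq_inv
  | induction_disjoint π₁ π₂ hd _ ih₁ ih₂ =>
    obtain ⟨σ₁, hσ₁, hπ₁, hfix₁⟩ := ih₁
    obtain ⟨σ₂, hσ₂, hπ₂, hfix₂⟩ := ih₂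
    have hσ₁π₂ : Disjoint σ₁ π₂ := fun x => (hd x).imp (@hfix₁ x) id
    have hπ₁σ₂ : Disjoint π₁ σ₂ := fun x => (hd x).imp id (@hfix₂ x)
    have hσ₁σ₂ : Disjoint σ₁ σ₂ := fun x => (hd x).imp (@hfix₁ x) (@hfix₂ x)
    refine ⟨σ₁ * σ₂, ?_, hd.commute.conj_mul_eq_inv hσ₁π₂.commute hπ₁σ₂.commute.symm
      hσ₁σ₂.commute hπ₁ hπ₂, fun x hx => ?_⟩
    · rw [hσ₁σ₂.symm.commute.mul_mul_mul_comm, hσ₁, hσ₂, one_mul]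
    · obtain ⟨hx₁, hx₂⟩ := hd.mul_apply_eq_iff.mp hx
      rw [mem_fixedPoints, IsFixedPt, mul_apply, hfix₂ hx₂, hfix₁ hx₁]

end Equiv.Perm

/-- Every permutation on `n` elements is a product of two involutions, i.e. of two
permutations each of which is a product of pairwise disjoint transpositions. -/
theorem perm_eq_prod_two_involutions {n : ℕ} (π : Equiv.Perm (Fin n)) :
    ∃ σ τ : Equiv.Perm (Fin n), σ * σ = 1 ∧ τ * τ = 1 ∧ π = σ * τ := by
  obtain ⟨σ, hσ, hπ, -⟩ := π.exists_involution_conj_eq_inv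
  exact exists_mul_self_eq_one_and_eq_mul_of_conj_eq_inv hσ hπ
end

section
/- Let {C_1, ..., C_s} be pairwise disjoint 2-cycle matrices, P a permutation matrix, C̃_i := (C_i − I_n)P, and define the s×s matrix Q̃ by Q̃_{ij} = c(C̃_i, C̃_j) for i ≠ j and Q̃_{ii} = c(C̃_i) + c(C̃_i, P) + c(P, C̃_i). Then for every α ∈ {0,1}^s, c(g(P,α)) = c(P) + αᵀQ̃α; hence minimizing c(g(P,α)) over binary α is equivalent to minimizing the QUBO αᵀQ̃α. -/
open Matrix

def cost {n : ℕ} (F D A B : Matrix (Fin n) (Fin n) ℝ) : ℝ :=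
  Matrix.trace (F * A * D * Bᵀ)

/-! The cost `c(A, B) = tr(F A D Bᵀ)` is bilinear, so `c(P + ∑ αᵢ C̃ᵢ)` expands into `c(P)`, terms
linear in `α`, and the quadratic form `∑ αᵢ αⱼ c(C̃ᵢ, C̃ⱼ)`. For binary `α` we have `αᵢ = αᵢ²`, so the
linear terms move onto the diagonal of `Q̃`. -/

open LinearMap (BilinForm)

namespace Matrix

variable {R ι : Type*} [CommRing R] [Fintype ι] [DecidableEq ι]

lemma dotProduct_diagonal_mulVec_of_isIdempotentElem {α : ι → R}
    (hα : ∀ i, IsIdempotentElem (α i)) (d : ι → R) :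
    α ⬝ᵥ diagonal d *ᵥ α = d ⬝ᵥ α := by
  simp only [dotProduct, mulVec_diagonal]
  exact Finset.sum_congr rfl fun i _ => by rw [mul_left_comm, hα i, mul_comm]

end Matrix

namespace LinearMap.BilinForm

variable {R M ι : Type*} [CommRing R] [AddCommGroup M] [Module R M]

section Qubo

variable [DecidableEq ι]

def quboMatrix (B : BilinForm R M) (x : M) (v : ι → M) : Matrix ι ι R :=
  Matrix.of fun i j => if i = j then B (v i) (v i) + B (v i) x + B x (v i) else B (v i) (v j)

lemma quboMatrix_eq_add_diagonal (B : BilinForm R M) (x : M) (v : ι → M) :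
    quboMatrix B x v =
      Matrix.of (fun i j => B (v i) (v j)) + diagonal fun i => B (v i) x + B x (v i) := by
  ext i j
  by_cases h : i = j
  · subst h; simp [quboMatrix, add_assoc]
  · simp [quboMatrix, h]

end Qubo

variable [Fintype ι]

lemma apply_sum_smul_sum_smul (B : BilinForm R M) (v : ι → M) (α : ι → R) :
    B (∑ i, α i • v i) (∑ i, α i • v i) = α ⬝ᵥ Matrix.of (fun i j => B (v i) (v j)) *ᵥ α := by
  simp only [map_sum, map_smul, LinearMap.sum_apply, LinearMap.smul_apply, smul_eq_mul,
    dotProduct, mulVec, Matrix.of_apply, Finset.mul_sum]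
  rw [Finset.sum_comm]
  exact Finset.sum_congr rfl fun i _ => Finset.sum_congr rfl fun j _ => by ring

lemma apply_add_sum_smul_self_of_isIdempotentElem [DecidableEq ι] (B : BilinForm R M) (x : M)
    (v : ι → M) {α : ι → R} (hα : ∀ i, IsIdempotentElem (α i)) :
    B (x + ∑ i, α i • v i) (x + ∑ i, α i • v i) = B x x + α ⬝ᵥ quboMatrix B x v *ᵥ α := by
  set S := ∑ i, α i • v i
  have linear_terms : B x S + B S x = (fun i => B (v i) x + B x (v i)) ⬝ᵥ α := by
    simp only [S, map_sum, map_smul, LinearMap.sum_apply, LinearMap.smul_apply, smul_eq_mul,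
      dotProduct, ← Finset.sum_add_distrib]
    exact Finset.sum_congr rfl fun i _ => by ring
  calc B (x + S) (x + S) = B x x + (B x S + B S x) + B S S := by
        simp only [map_add, LinearMap.add_apply]; ring
    _ = B x x + α ⬝ᵥ quboMatrix B x v *ᵥ α := by
        rw [linear_terms, apply_sum_smul_sum_smul, quboMatrix_eq_add_diagonal, add_mulVec,
          dotProduct_add, dotProduct_diagonal_mulVec_of_isIdempotentElem hα]
        ring

end LinearMap.BilinForm

def costBilin {n : ℕ} (F D : Matrix (Fin n) (Fin n) ℝ) : BilinForm ℝ (Matrix (Fin n) (Fin n) ℝ) :=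
  LinearMap.mk₂ ℝ (cost F D)
    (fun A B E => by simp [cost, Matrix.mul_add, Matrix.add_mul])
    (fun r A E => by simp [cost])
    (fun E A B => by simp [cost, Matrix.mul_add])
    (fun r E A => by simp [cost])

theorem cost_qubo_form_general {n s : ℕ} (F D : Matrix (Fin n) (Fin n) ℝ)
    (P : Matrix (Fin n) (Fin n) ℝ)
    (Ct : Fin s → Matrix (Fin n) (Fin n) ℝ)
    (Q : Matrix (Fin s) (Fin s) ℝ)
    (hQ : ∀ i j, Q i j = if i = j then
        cost F D (Ct i) (Ct i) + cost F D (Ct i) P + cost F D P (Ct i)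
      else cost F D (Ct i) (Ct j))
    (g : (Fin s → ℝ) → Matrix (Fin n) (Fin n) ℝ)
    (hg : ∀ β, g β = P + ∑ i, β i • Ct i) :
    (∀ α : Fin s → ℝ, (∀ i, α i = 0 ∨ α i = 1) →
        cost F D (g α) (g α) = cost F D P P + α ⬝ᵥ Q.mulVec α) ∧
    (∀ α α' : Fin s → ℝ, (∀ i, α i = 0 ∨ α i = 1) → (∀ i, α' i = 0 ∨ α' i = 1) →
        (cost F D (g α) (g α) ≤ cost F D (g α') (g α') ↔
          α ⬝ᵥ Q.mulVec α ≤ α' ⬝ᵥ Q.mulVec α')) := by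
  have hQ_eq : Q = LinearMap.BilinForm.quboMatrix (costBilin F D) P Ct :=
    Matrix.ext fun i j => hQ i j
  have expand : ∀ α : Fin s → ℝ, (∀ i, α i = 0 ∨ α i = 1) →
      cost F D (g α) (g α) = cost F D P P + α ⬝ᵥ Q.mulVec α := fun α hα => by
    rw [hg, hQ_eq]
    refine LinearMap.BilinForm.apply_add_sum_smul_self_of_isIdempotentElem (costBilin F D) P Ct
      fun i => ?_
    rcases hα i with h | h <;> rw [h]
    exacts [.zero, .one]
  refine ⟨expand, fun α α' hα hα' => ?_⟩
  rw [expand α hα, expand α' hα', add_le_add_iff_left]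

/-- The QUBO form of the cyclic expansion: with `C̃ i = (C i - I) P`,
`g(P,α) = P + ∑ i, α i • C̃ i` and `Q̃` as defined, `c(g(P,α)) = c(P) + αᵀ Q̃ α`;
hence minimizing `c(g(P,α))` over binary `α` is equivalent to minimizing `αᵀ Q̃ α`. -/
theorem cost_qubo_form {n s : ℕ} (F D : Matrix (Fin n) (Fin n) ℝ)
    (C : Fin s → Matrix (Fin n) (Fin n) ℝ)
    (hC : ∀ i, IsTwoCycleMatrix (C i))
    (hdisj : ∀ i j, i ≠ j → DisjointTwoCycles (C i) (C j))
    (P : Matrix (Fin n) (Fin n) ℝ) (hP : IsPermMatrix P)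
    (Ct : Fin s → Matrix (Fin n) (Fin n) ℝ) (hCt : ∀ i, Ct i = (C i - 1) * P)
    (Q : Matrix (Fin s) (Fin s) ℝ)
    (hQ : ∀ i j, Q i j = if i = j then
        cost F D (Ct i) (Ct i) + cost F D (Ct i) P + cost F D P (Ct i)
      else cost F D (Ct i) (Ct j))
    (g : (Fin s → ℝ) → Matrix (Fin n) (Fin n) ℝ)
    (hg : ∀ β, g β = P + ∑ i, β i • Ct i) :
    (∀ α : Fin s → ℝ, (∀ i, α i = 0 ∨ α i = 1) →
        cost F D (g α) (g α) = cost F D P P + α ⬝ᵥ Q.mulVec α) ∧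
    (∀ α α' : Fin s → ℝ, (∀ i, α i = 0 ∨ α i = 1) → (∀ i, α' i = 0 ∨ α' i = 1) →
        (cost F D (g α) (g α) ≤ cost F D (g α') (g α') ↔
          α ⬝ᵥ Q.mulVec α ≤ α' ⬝ᵥ Q.mulVec α')) :=
  cost_qubo_form_general F D P Ct Q hQ g hg
end
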